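/- Let x < a and b < 0, and let f(s) = (a−x)·s^{−3/2}·φ((a + bs − x)/√s) for s > 0 be the first-passage-time density of Brownian motion started at x through the line a + bt. Then 1 − ∫_0^∞ f(s)·(∫_0^∞ e^{−b²(s+t)/2}·√s/(π(s+t)√t) dt) ds = ∫_0^∞ (1 − 2Φ(b√s))·f(s) ds, and this quantity is strictly positive; that is, P(T₂ = +∞) = 2·sgn(b)·E(Φ(b√τ₁) − 1/2) > 0. -/

import Mathlib

/-!
Write `e^{-b²r/2}/r = ∫_{|b|}^∞ z e^{-z²r/2} dz` with `r = s + t`. After exchanging the order of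
integration, the `t`-integral is the Laplace transform `∫_0^∞ e^{-wt} t^{-1/2} dt = √(π/w)` at
`w = z²/2`, which leaves a Gaussian tail: the kernel integrates to `2Φ(b√s)`. The first equality is
then `∫ f = 1`, i.e. for `b < 0` the line is crossed almost surely, because `f` is the derivative
of `Φ((x-a)/√t - b√t) + e^{2b(x-a)} Φ((x-a)/√t + b√t)`, which rises from `0` at `t = 0` to `1`
at `t = ∞`. Positivity is `Φ(b√s) < Φ(0) = 1/2`.
-/

open MeasureTheory

/-- The standard normal density `φ`. -/
noncomputable def stdPhi (z : ℝ) : ℝ := Real.exp (-z ^ 2 / 2) / Real.sqrt (2 * Real.pi)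

/-- The standard normal cumulative distribution function `Φ`. -/
noncomputable def Phi (y : ℝ) : ℝ := ∫ z in Set.Iic y, stdPhi z

/-- The (possibly defective) first-passage-time density of Brownian motion started at `x`
through the line `a + b s`. -/
noncomputable def fpt (a x b s : ℝ) : ℝ :=
  (a - x) * s ^ (-(3:ℝ) / 2) * stdPhi ((a + b * s - x) / Real.sqrt s)

open Set Filter Topology Real ProbabilityTheory

lemma setIntegral_pos_of_forall_pos {X : Type*} [MeasurableSpace X] {μ : Measure X} {s : Set X}
    {f : X → ℝ} (hs : MeasurableSet s) (hμ : μ s ≠ 0) (hf : IntegrableOn f s μ)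
    (hpos : ∀ x ∈ s, 0 < f x) : 0 < ∫ x in s, f x ∂μ := by
  rw [setIntegral_pos_iff_support_of_nonneg_ae (ae_restrict_of_forall_mem hs fun x hx =>
    (hpos x hx).le) hf, inter_eq_right.2 fun x hx => Function.mem_support.2 (hpos x hx).ne']
  exact pos_iff_ne_zero.2 hμ

lemma integrable_mul_exp_neg_sq_mul {r : ℝ} (hr : 0 < r) :
    Integrable fun z : ℝ => z * exp (-z ^ 2 * r / 2) := by
  convert integrable_mul_exp_neg_mul_sq (half_pos hr) using 4
  ring

lemma integral_Ioi_mul_exp_neg_sq_mul {r : ℝ} (hr : 0 < r) (k : ℝ) :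
    ∫ z in Ioi k, z * exp (-z ^ 2 * r / 2) = exp (-k ^ 2 * r / 2) / r := by
  have hderiv (z : ℝ) (_ : z ∈ Ici k) :
      HasDerivAt (fun z => -exp (-z ^ 2 * r / 2) / r) (z * exp (-z ^ 2 * r / 2)) z := by
    have hq : HasDerivAt (fun z : ℝ => -z ^ 2 * r / 2) (-(z * r)) z := by
      refine ((((hasDerivAt_id' z).fun_pow 2).fun_neg.mul_const r).div_const 2).congr_deriv ?_
      simp
      ring
    refine (hq.exp.neg.div_const r).congr_deriv ?_
    field_simp
  have hlim : Tendsto (fun z : ℝ => -exp (-z ^ 2 * r / 2) / r) atTop (𝓝 (-0 / r)) := by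
    refine ((tendsto_exp_atBot.comp ?_).neg).div_const r
    refine (tendsto_div_const_atBot_of_pos two_pos).2 ?_
    exact (tendsto_mul_const_atBot_of_pos hr).2
      (tendsto_neg_atTop_atBot.comp (tendsto_pow_atTop two_ne_zero))
  rw [integral_Ioi_of_hasDerivAt_of_tendsto' hderiv
    (integrable_mul_exp_neg_sq_mul hr).integrableOn hlim]
  ring

lemma integral_exp_neg_mul_div_sqrt {w : ℝ} (hw : 0 < w) :
    ∫ t in Ioi 0, exp (-(w * t)) / √t = √(π / w) := by
  have h := integral_rpow_mul_exp_neg_mul_Ioi one_half_pos hw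
  rw [Gamma_one_half_eq, ← sqrt_eq_rpow, ← sqrt_mul (by positivity), one_div_mul_eq_div] at h
  rw [← h]
  refine setIntegral_congr_fun measurableSet_Ioi fun t ht => ?_
  rw [show (1 / 2 : ℝ) - 1 = -(1 / 2) by norm_num, rpow_neg (mem_Ioi.1 ht).le, ← sqrt_eq_rpow,
    div_eq_inv_mul]

lemma stdPhi_eq_gaussianPDFReal : stdPhi = gaussianPDFReal 0 1 := by
  ext z
  simp [stdPhi, gaussianPDFReal, div_eq_inv_mul]

lemma stdPhi_pos (z : ℝ) : 0 < stdPhi z := by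
  rw [stdPhi_eq_gaussianPDFReal]
  exact gaussianPDFReal_pos 0 1 z one_ne_zero

lemma stdPhi_neg (z : ℝ) : stdPhi (-z) = stdPhi z := by
  simp [stdPhi]

lemma continuous_stdPhi : Continuous stdPhi := by
  unfold stdPhi
  fun_prop

lemma integrable_stdPhi : Integrable stdPhi := by
  rw [stdPhi_eq_gaussianPDFReal]
  exact integrable_gaussianPDFReal 0 1

lemma integral_stdPhi : ∫ z, stdPhi z = 1 := by
  rw [stdPhi_eq_gaussianPDFReal]
  exact integral_gaussianPDFReal_eq_one 0 one_ne_zero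

lemma hasDerivAt_Phi (y : ℝ) : HasDerivAt Phi (stdPhi y) y := by
  have hPhi : Phi = fun w => Phi 0 + ∫ z in (0:ℝ)..w, stdPhi z := by
    ext w
    rw [Phi, Phi, ← intervalIntegral.integral_Iic_sub_Iic integrable_stdPhi.integrableOn
      integrable_stdPhi.integrableOn, add_sub_cancel]
  rw [hPhi]
  exact (intervalIntegral.integral_hasDerivAt_right integrable_stdPhi.intervalIntegrable
    integrable_stdPhi.aestronglyMeasurable.stronglyMeasurableAtFilter
    continuous_stdPhi.continuousAt).const_add _

@[fun_prop]
lemma continuous_Phi : Continuous Phi :=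
  continuous_iff_continuousAt.2 fun y => (hasDerivAt_Phi y).continuousAt

lemma strictMono_Phi : StrictMono Phi :=
  strictMono_of_hasDerivAt_pos hasDerivAt_Phi stdPhi_pos

lemma Phi_nonneg (y : ℝ) : 0 ≤ Phi y :=
  setIntegral_nonneg measurableSet_Iic fun z _ => (stdPhi_pos z).le

lemma Phi_neg (y : ℝ) : Phi (-y) = ∫ z in Ioi y, stdPhi z := by
  rw [Phi, ← integral_comp_neg_Ioi]
  simp_rw [stdPhi_neg]

lemma Phi_add_Phi_neg (y : ℝ) : Phi y + Phi (-y) = 1 := by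
  rw [Phi_neg, Phi, intervalIntegral.integral_Iic_add_Ioi integrable_stdPhi.integrableOn
    integrable_stdPhi.integrableOn, integral_stdPhi]

lemma Phi_le_one (y : ℝ) : Phi y ≤ 1 := by
  linarith [Phi_add_Phi_neg y, Phi_nonneg (-y)]

lemma Phi_lt_half {y : ℝ} (hy : y < 0) : Phi y < 1 / 2 := by
  linarith [Phi_add_Phi_neg y, strictMono_Phi (show y < -y by linarith)]

lemma tendsto_Phi_atTop : Tendsto Phi atTop (𝓝 1) := by
  rw [← integral_stdPhi]
  exact (aecover_Iic tendsto_id).integral_tendsto_of_countably_generated integrable_stdPhi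

lemma tendsto_Phi_atBot : Tendsto Phi atBot (𝓝 0) := by
  have h : Tendsto (fun y => 1 - Phi (-y)) atBot (𝓝 (1 - 1)) :=
    tendsto_const_nhds.sub (tendsto_Phi_atTop.comp tendsto_neg_atBot_atTop)
  rw [sub_self] at h
  exact h.congr fun y => by linarith [Phi_add_Phi_neg y]

lemma Phi_neg_mul {σ : ℝ} (hσ : 0 < σ) (k : ℝ) :
    Phi (-(σ * k)) = σ * ∫ z in Ioi k, stdPhi (σ * z) := by
  rw [integral_comp_mul_left_Ioi _ _ hσ, smul_eq_mul, mul_inv_cancel_left₀ hσ.ne', Phi_neg]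

lemma exp_mul_stdPhi_add (u v : ℝ) : exp (2 * (u * v)) * stdPhi (u + v) = stdPhi (u - v) := by
  rw [stdPhi, stdPhi, mul_div_assoc', ← exp_add]
  ring_nf

lemma rpow_neg_three_halves {t : ℝ} (ht : 0 < t) : t ^ (-(3:ℝ) / 2) = (t * √t)⁻¹ := by
  rw [show -(3:ℝ) / 2 = -(1 + 1 / 2) by norm_num, rpow_neg ht.le, rpow_add ht, rpow_one,
    ← sqrt_eq_rpow]

lemma fpt_pos {a x b t : ℝ} (hx : x < a) (ht : 0 < t) : 0 < fpt a x b t :=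
  mul_pos (mul_pos (sub_pos.2 hx) (rpow_pos_of_pos ht _)) (stdPhi_pos _)

noncomputable def fptCdf (a x b t : ℝ) : ℝ :=
  if t ≤ 0 then 0 else
    Phi ((x - a) / √t - b * √t) + exp (2 * b * (x - a)) * Phi ((x - a) / √t + b * √t)

lemma fptCdf_of_pos (a x b : ℝ) {t : ℝ} (ht : 0 < t) : fptCdf a x b t =
    Phi ((x - a) / √t - b * √t) + exp (2 * b * (x - a)) * Phi ((x - a) / √t + b * √t) :=
  if_neg ht.not_ge

lemma hasDerivAt_fptCdf (a x b : ℝ) {t : ℝ} (ht : 0 < t) :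
    HasDerivAt (fptCdf a x b) (fpt a x b t) t := by
  have hq : √t ≠ 0 := (sqrt_pos.2 ht).ne'
  have hsqrt : HasDerivAt sqrt (1 / (2 * √t)) t := hasDerivAt_sqrt ht.ne'
  have hinv : HasDerivAt (fun s => (x - a) / √s) (-(x - a) / (2 * t * √t)) t := by
    refine ((hasDerivAt_const t (x - a)).fun_div hsqrt hq).congr_deriv ?_
    field_simp
    rw [sq_sqrt ht.le]
    ring
  have hg₁ : HasDerivAt (fun s => (x - a) / √s - b * √s)
      (-(x - a) / (2 * t * √t) - b * (1 / (2 * √t))) t := hinv.sub (hsqrt.const_mul b)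
  have hg₂ : HasDerivAt (fun s => (x - a) / √s + b * √s)
      (-(x - a) / (2 * t * √t) + b * (1 / (2 * √t))) t := hinv.add (hsqrt.const_mul b)
  have hF := ((hasDerivAt_Phi _).comp t hg₁).add
    (((hasDerivAt_Phi _).comp t hg₂).const_mul (exp (2 * b * (x - a))))
  have hexp : exp (2 * b * (x - a)) = exp (2 * ((x - a) / √t * (b * √t))) := by
    congr 1
    field_simp
  have hφ : (a + b * t - x) / √t = -((x - a) / √t - b * √t) := by
    field_simp
    rw [sq_sqrt ht.le]
    ring
  refine (hF.congr_deriv ?_).congr_of_eventuallyEq ?_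
  · rw [← mul_assoc, hexp, exp_mul_stdPhi_add, ← mul_add, fpt, hφ, stdPhi_neg,
      rpow_neg_three_halves ht]
    field_simp
    ring
  · filter_upwards [eventually_gt_nhds ht] with s hs
    exact fptCdf_of_pos a x b hs

lemma continuousWithinAt_fptCdf_zero {a x : ℝ} (hx : x < a) (b : ℝ) :
    ContinuousWithinAt (fptCdf a x b) (Ici 0) 0 := by
  have hinv : Tendsto (fun t => (x - a) / √t) (𝓝[>] 0) atBot := by
    simp_rw [div_eq_mul_inv, ← sqrt_inv]
    exact (tendsto_const_mul_atBot_of_neg (sub_neg.2 hx)).2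
      (tendsto_sqrt_atTop.comp tendsto_inv_nhdsGT_zero)
  have hsqrt : Tendsto sqrt (𝓝[>] 0) (𝓝 0) := by
    simpa using continuous_sqrt.continuousWithinAt.tendsto (s := Ioi 0) (x := 0)
  have harg (c : ℝ) : Tendsto (fun t => (x - a) / √t + c * √t) (𝓝[>] 0) atBot :=
    hinv.atBot_add (hsqrt.const_mul c)
  have hF := (tendsto_Phi_atBot.comp (harg (-b))).add
    ((tendsto_Phi_atBot.comp (harg b)).const_mul (exp (2 * b * (x - a))))
  rw [mul_zero, add_zero] at hF
  rw [← continuousWithinAt_Ioi_iff_Ici, ContinuousWithinAt, fptCdf, if_pos le_rfl]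
  refine hF.congr' ?_
  filter_upwards [self_mem_nhdsWithin] with t ht
  simp [fptCdf_of_pos a x b ht, sub_eq_add_neg]

lemma tendsto_fptCdf_atTop {a x b : ℝ} (hb : b < 0) :
    Tendsto (fptCdf a x b) atTop (𝓝 1) := by
  have hinv : Tendsto (fun t => (x - a) / √t) atTop (𝓝 0) :=
    tendsto_const_nhds.div_atTop tendsto_sqrt_atTop
  have harg₁ : Tendsto (fun t => (x - a) / √t - b * √t) atTop atTop := by
    simpa [sub_eq_add_neg] using
      hinv.add_atTop (tendsto_sqrt_atTop.const_mul_atTop (neg_pos.2 hb))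
  have harg₂ : Tendsto (fun t => (x - a) / √t + b * √t) atTop atBot :=
    hinv.add_atBot ((tendsto_const_mul_atBot_of_neg hb).2 tendsto_sqrt_atTop)
  have hF := (tendsto_Phi_atTop.comp harg₁).add
    ((tendsto_Phi_atBot.comp harg₂).const_mul (exp (2 * b * (x - a))))
  rw [mul_zero, add_zero] at hF
  refine hF.congr' ?_
  filter_upwards [eventually_gt_atTop 0] with t ht
  exact (fptCdf_of_pos a x b ht).symm

lemma integrableOn_fpt {a x b : ℝ} (hx : x < a) (hb : b < 0) :
    IntegrableOn (fpt a x b) (Ioi 0) :=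
  integrableOn_Ioi_deriv_of_nonneg (continuousWithinAt_fptCdf_zero hx b)
    (fun _ ht => hasDerivAt_fptCdf a x b ht) (fun _ ht => (fpt_pos hx ht).le)
    (tendsto_fptCdf_atTop hb)

lemma integral_fpt {a x b : ℝ} (hx : x < a) (hb : b < 0) :
    ∫ s in Ioi 0, fpt a x b s = 1 := by
  rw [integral_Ioi_of_hasDerivAt_of_nonneg (continuousWithinAt_fptCdf_zero hx b)
    (fun _ ht => hasDerivAt_fptCdf a x b ht) (fun _ ht => (fpt_pos hx ht).le)
    (tendsto_fptCdf_atTop hb), fptCdf, if_pos le_rfl, sub_zero]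

lemma integrable_prod_mul_exp_neg_sq_div_sqrt {s k : ℝ} (hs : 0 < s) (hk : 0 < k) :
    Integrable (Function.uncurry fun t z : ℝ => z * exp (-z ^ 2 * (s + t) / 2) / √t)
      ((volume.restrict (Ioi 0)).prod (volume.restrict (Ioi k))) := by
  have hw : 0 < k ^ 2 / 2 := by positivity
  have hg : IntegrableOn (fun t => exp (-(k ^ 2 / 2 * t)) / √t) (Ioi 0) :=
    .of_integral_ne_zero (by rw [integral_exp_neg_mul_div_sqrt hw]; positivity)
  refine (hg.mul_prod (integrable_mul_exp_neg_sq_mul hs).integrableOn).mono' ?_ ?_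
  · exact Measurable.aestronglyMeasurable (by fun_prop)
  · rw [Measure.prod_restrict]
    filter_upwards [ae_restrict_mem (measurableSet_Ioi.prod measurableSet_Ioi)]
      with ⟨t, z⟩ ⟨ht, hz⟩
    simp only [mem_Ioi] at ht hz
    have hz0 : 0 < z := hk.trans hz
    rw [Function.uncurry_apply_pair, norm_of_nonneg (by positivity)]
    calc z * exp (-z ^ 2 * (s + t) / 2) / √t
        = z * exp (-z ^ 2 * s / 2) * exp (-(z ^ 2 / 2 * t)) / √t := by
          rw [mul_assoc, ← exp_add]; ring_nf
      _ ≤ z * exp (-z ^ 2 * s / 2) * exp (-(k ^ 2 / 2 * t)) / √t := by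
          gcongr
      _ = _ := by ring

lemma integral_Ioi_exp_div_mul_sqrt_eq_two_mul_Phi {b s : ℝ} (hb : b ≠ 0) (hs : 0 < s) :
    ∫ t in Ioi 0, exp (-b ^ 2 * (s + t) / 2) * √s / (π * (s + t) * √t) =
      2 * Phi (-(√s * |b|)) := by
  have hk : 0 < |b| := abs_pos.2 hb
  have hlaplace (t : ℝ) (ht : t ∈ Ioi 0) :
      exp (-b ^ 2 * (s + t) / 2) * √s / (π * (s + t) * √t) =
        √s / π * ∫ z in Ioi |b|, z * exp (-z ^ 2 * (s + t) / 2) / √t := by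
    have hst : 0 < s + t := add_pos hs ht
    rw [integral_div, integral_Ioi_mul_exp_neg_sq_mul hst, sq_abs]
    field_simp
  have hinner (z : ℝ) (hz : z ∈ Ioi |b|) :
      ∫ t in Ioi 0, z * exp (-z ^ 2 * (s + t) / 2) / √t = 2 * π * stdPhi (√s * z) := by
    have hz : 0 < z := hk.trans hz
    have hsplit (t : ℝ) : z * exp (-z ^ 2 * (s + t) / 2) / √t =
        z * exp (-z ^ 2 * s / 2) * (exp (-(z ^ 2 / 2 * t)) / √t) := by
      rw [show -z ^ 2 * (s + t) / 2 = -z ^ 2 * s / 2 + -(z ^ 2 / 2 * t) by ring, exp_add]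
      ring
    simp_rw [hsplit]
    rw [integral_const_mul, integral_exp_neg_mul_div_sqrt (by positivity), stdPhi, mul_pow,
      sq_sqrt hs.le, show π / (z ^ 2 / 2) = 2 * π / z ^ 2 by ring, sqrt_div' _ (sq_nonneg z),
      sqrt_sq hz.le, show -(s * z ^ 2) / 2 = -z ^ 2 * s / 2 by ring]
    field_simp
    rw [sq_sqrt (by positivity)]
  calc ∫ t in Ioi 0, exp (-b ^ 2 * (s + t) / 2) * √s / (π * (s + t) * √t)
      = √s / π * ∫ t in Ioi 0, ∫ z in Ioi |b|, z * exp (-z ^ 2 * (s + t) / 2) / √t := by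
        rw [setIntegral_congr_fun measurableSet_Ioi hlaplace, integral_const_mul]
    _ = √s / π * ∫ z in Ioi |b|, 2 * π * stdPhi (√s * z) := by
        rw [integral_integral_swap (integrable_prod_mul_exp_neg_sq_div_sqrt hs hk),
          setIntegral_congr_fun measurableSet_Ioi hinner]
    _ = 2 * Phi (-(√s * |b|)) := by
        rw [integral_const_mul, Phi_neg_mul (sqrt_pos.2 hs)]
        field_simp

/-- for `x < a` and `b < 0`,
`P(T₂ = +∞) = 1 - ∫_0^∞ f(s) (∫_0^∞ e^{-b²(s+t)/2} √s/(π(s+t)√t) dt) ds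
  = ∫_0^∞ (1 - 2Φ(b√s)) f(s) ds > 0`. -/
theorem stmt_6 (a x b : ℝ) (hx : x < a) (hb : b < 0) :
    (1 - ∫ s in Set.Ioi (0:ℝ), fpt a x b s *
        ∫ t in Set.Ioi (0:ℝ),
          Real.exp (-b ^ 2 * (s + t) / 2) * Real.sqrt s /
            (Real.pi * (s + t) * Real.sqrt t)) =
      (∫ s in Set.Ioi (0:ℝ), (1 - 2 * Phi (b * Real.sqrt s)) * fpt a x b s) ∧
    0 < ∫ s in Set.Ioi (0:ℝ), (1 - 2 * Phi (b * Real.sqrt s)) * fpt a x b s := by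
  have hkernel (s : ℝ) (hs : s ∈ Ioi 0) :
      fpt a x b s * ∫ t in Ioi 0, exp (-b ^ 2 * (s + t) / 2) * √s / (π * (s + t) * √t) =
        2 * Phi (b * √s) * fpt a x b s := by
    rw [integral_Ioi_exp_div_mul_sqrt_eq_two_mul_Phi hb.ne (mem_Ioi.1 hs), abs_of_neg hb]
    ring_nf
  have hΦ : IntegrableOn (fun s => 2 * Phi (b * √s) * fpt a x b s) (Ioi 0) :=
    (integrableOn_fpt hx hb).bdd_mul (c := 2) (by fun_prop) <| .of_forall fun s => by
      rw [norm_mul, norm_two, Real.norm_of_nonneg (Phi_nonneg _)]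
      linarith [Phi_le_one (b * √s)]
  have hdiff : ∫ s in Ioi 0, (1 - 2 * Phi (b * √s)) * fpt a x b s =
      1 - ∫ s in Ioi 0, 2 * Phi (b * √s) * fpt a x b s := by
    simp_rw [sub_mul, one_mul]
    rw [integral_sub (integrableOn_fpt hx hb) hΦ, integral_fpt hx hb]
  refine ⟨by rw [hdiff, setIntegral_congr_fun measurableSet_Ioi hkernel], ?_⟩
  refine setIntegral_pos_of_forall_pos measurableSet_Ioi (by simp) ?_ fun s hs => ?_
  · simp_rw [sub_mul, one_mul]
    exact (integrableOn_fpt hx hb).sub hΦ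
  · have := Phi_lt_half (mul_neg_of_neg_of_pos hb (sqrt_pos.2 hs))
    exact mul_pos (by linarith) (fpt_pos hx hs)
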